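/- If B is a c.c.c. Boolean algebra, then there is a generalized Galois-Tukey connection from the reaping relation of ωB/Fin to the sequential composition Part*(B) ; R(P(ω)/fin). Consequently 𝔯(ωB/Fin) ≤ 𝔡(Part*(B)) · 𝔯 and min{𝔟(Part*(B)), 𝔰} ≤ 𝔰(ωB/Fin). -/

import Mathlib

/-- A relational system `⟨A₋, A, A₊⟩`. -/
structure RelSys : Type 1 where
  Dom : Type
  Cod : Type
  Rel : Dom → Cod → Prop

/-- The dominating number `𝔡(A)` of a relational system. -/
noncomputable def dNum (S : RelSys) : Cardinal :=
  sInf { c | ∃ Y : Set S.Cod, Cardinal.mk Y = c ∧ ∀ x : S.Dom, ∃ y ∈ Y, S.Rel x y }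

/-- The bounding number `𝔟(A)` of a relational system. -/
noncomputable def bNum (S : RelSys) : Cardinal :=
  sInf { c | ∃ X : Set S.Dom, Cardinal.mk X = c ∧ ∀ y : S.Cod, ∃ x ∈ X, ¬ S.Rel x y }

/-- A generalized Galois–Tukey connection from `S` to `T` (`S ≤_T T`). -/
def GT (S T : RelSys) : Prop :=
  ∃ (φm : S.Dom → T.Dom) (φp : T.Cod → S.Cod),
    ∀ a b, T.Rel (φm a) b → S.Rel a (φp b)

/-- Galois–Tukey equivalence. -/
def GTequiv (S T : RelSys) : Prop := GT S T ∧ GT T S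

/-- The σ-version `A^σ` of a relational system. -/
def sigmaSys (S : RelSys) : RelSys :=
  ⟨S.Dom, ℕ → S.Cod, fun a f => ∃ n, S.Rel a (f n)⟩

/-- Sequential composition `A;B` of relational systems. -/
def seqComp (S T : RelSys) : RelSys :=
  ⟨S.Dom × (S.Cod → T.Dom), S.Cod × T.Cod,
   fun p q => S.Rel p.1 q.1 ∧ T.Rel (p.2 q.1) q.2⟩

/-- An antichain in a Boolean algebra: pairwise disjoint nonzero elements. -/
def BAAntichain {α : Type} [BooleanAlgebra α] (A : Set α) : Prop :=
  (∀ a ∈ A, a ≠ ⊥) ∧ ∀ a ∈ A, ∀ b ∈ A, a ≠ b → a ⊓ b = ⊥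

/-- A maximal antichain in a Boolean algebra. -/
def MaxAC {α : Type} [BooleanAlgebra α] (A : Set α) : Prop :=
  BAAntichain A ∧ ∀ b : α, b ≠ ⊥ → ∃ a ∈ A, a ⊓ b ≠ ⊥

/-- The countable chain condition. -/
def CCC (α : Type) [BooleanAlgebra α] : Prop :=
  ∀ A : Set α, BAAntichain A → A.Countable

/-- `C` refines `A` (written `A ≤ C`): every element of `C` is below some element of `A`. -/
def Refines {α : Type} [BooleanAlgebra α] (A C : Set α) : Prop :=
  ∀ c ∈ C, ∃ a ∈ A, c ≤ a

/-- `C` almost refines `A` (written `A ≤* C`). -/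
def AlmostRefines {α : Type} [BooleanAlgebra α] (A C : Set α) : Prop :=
  ∃ F : Finset α, ↑F ⊆ A ∧ Refines ((A \ ↑F) ∪ {F.sup id}) C

/-- The set of maximal antichains of `α`. -/
def PartT (α : Type) [BooleanAlgebra α] : Type := {A : Set α // MaxAC A}

/-- The refinement relational system `Part(α)`. -/
def PartSys (α : Type) [BooleanAlgebra α] : RelSys :=
  ⟨PartT α, PartT α, fun A C => Refines A.1 C.1⟩

/-- The almost-refinement relational system `Part*(α)`. -/
def PartStar (α : Type) [BooleanAlgebra α] : RelSys :=
  ⟨PartT α, PartT α, fun A C => AlmostRefines A.1 C.1⟩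

/-- The eventual domination relational system `(ωω, ≤*, ωω)`. -/
def domSys : RelSys :=
  ⟨ℕ → ℕ, ℕ → ℕ, fun f g => ∀ᶠ n in Filter.atTop, f n ≤ g n⟩

/-- Quotients of Boolean rings are Boolean rings. -/
instance quotBooleanRing (R : Type) [BooleanRing R] (I : Ideal R) :
    BooleanRing (R ⧸ I) :=
  { (inferInstance : CommRing (R ⧸ I)) with
    isIdempotentElem := fun a => by
      obtain ⟨x, rfl⟩ := Ideal.Quotient.mk_surjective a
      show _ * _ = _
      rw [← map_mul, BooleanRing.mul_self] }

/-- The quotient of a Boolean algebra by an ideal (presented as a ring ideal of the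
associated Boolean ring), again viewed as a Boolean algebra. -/
def quotAlg (α : Type) [BooleanAlgebra α] (I : Ideal (AsBoolRing α)) : Type :=
  AsBoolAlg (AsBoolRing α ⧸ I)

noncomputable instance quotAlgBA (α : Type) [BooleanAlgebra α] (I : Ideal (AsBoolRing α)) :
    BooleanAlgebra (quotAlg α I) :=
  inferInstanceAs (BooleanAlgebra (AsBoolAlg (AsBoolRing α ⧸ I)))

/-- The quotient map from a Boolean algebra to its quotient algebra. -/
def quotCls {α : Type} [BooleanAlgebra α] (I : Ideal (AsBoolRing α)) (a : α) : quotAlg α I :=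
  toBoolAlg (Ideal.Quotient.mk I (toBoolRing a))

/-- The ideal of finite subsets of `ω`, as a ring ideal of `P(ω)`. -/
def finIdeal : Ideal (AsBoolRing (Set ℕ)) where
  carrier := {x | (ofBoolRing x : Set ℕ).Finite}
  zero_mem' := by simp [ofBoolRing_zero, Set.bot_eq_empty]
  add_mem' := by
    intro a b ha hb
    simpa [ofBoolRing_add] using ((ha.union hb).subset (Set.symmDiff_subset_union))
  smul_mem' := by
    intro c x hx
    simpa [smul_eq_mul, ofBoolRing_mul] using hx.subset (by simp [Set.inf_eq_inter])

/-- `P(ω)/fin`. -/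
def PomegaFin : Type := quotAlg (Set ℕ) finIdeal

noncomputable instance : BooleanAlgebra PomegaFin := quotAlgBA _ _

/-- The ideal `Fin` of the product algebra `ωB`: functions with finite support. -/
def finSuppIdeal (B : Type) [BooleanAlgebra B] : Ideal (AsBoolRing (ℕ → B)) where
  carrier := {x | {n | (ofBoolRing x : ℕ → B) n ≠ ⊥}.Finite}
  zero_mem' := by simp [ofBoolRing_zero]
  add_mem' := by
    intro a b ha hb
    refine ((ha.union hb).subset ?_)
    intro n hn
    simp only [ofBoolRing_add, Pi.symmDiff_apply, Set.mem_setOf_eq] at hn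
    by_contra h
    try push_neg at h
    simp only [Set.mem_union, Set.mem_setOf_eq] at h
    push_neg at h
    simp [h.1, h.2] at hn
  smul_mem' := by
    intro c x hx
    refine hx.subset ?_
    intro n hn
    simp only [smul_eq_mul, ofBoolRing_mul, Pi.inf_apply, Set.mem_setOf_eq] at hn
    simp only [Set.mem_setOf_eq]
    intro h
    simp [h] at hn

/-- The reduced power `ωB/Fin` of a Boolean algebra `B`. -/
def redPow (B : Type) [BooleanAlgebra B] : Type := quotAlg (ℕ → B) (finSuppIdeal B)

noncomputable instance (B : Type) [BooleanAlgebra B] : BooleanAlgebra (redPow B) := quotAlgBA _ _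
/-- The reaping relational system of a Boolean algebra. -/
def reapSys (α : Type) [BooleanAlgebra α] : RelSys :=
  ⟨α, {r : α // r ≠ ⊥}, fun b r => r.1 ≤ b ∨ r.1 ⊓ b = ⊥⟩

/-- An ultrafilter on a Boolean algebra. -/
def IsBAUltrafilter {α : Type} [BooleanAlgebra α] (U : Set α) : Prop :=
  ⊥ ∉ U ∧ (∀ a ∈ U, ∀ b ∈ U, a ⊓ b ∈ U) ∧ (∀ a ∈ U, ∀ b, a ≤ b → b ∈ U) ∧
    ∀ a : α, a ∈ U ∨ aᶜ ∈ U

/-- A principal ultrafilter: one generated by a single element. -/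
def IsPrincipal {α : Type} [BooleanAlgebra α] (U : Set α) : Prop :=
  ∃ a : α, U = {b | a ≤ b}

/-- The ultrafilter number of a Boolean algebra: the least cofinality of `(U, ≥)`
over non-principal ultrafilters `U`. -/
noncomputable def uNum (α : Type) [BooleanAlgebra α] : Cardinal :=
  sInf { c | ∃ U : Set α, IsBAUltrafilter U ∧ ¬ IsPrincipal U ∧
    ∃ D : Set α, D ⊆ U ∧ (∀ u ∈ U, ∃ d ∈ D, d ≤ u) ∧ Cardinal.mk D = c }

/-!
If `B` has an atom `a`, the constant choice `a` decides every `g n`. Otherwise c.c.c. gives a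
maximal antichain `{m k}` enumerated injectively by `ω`. For `x = [g]` let `A_g` split each `m k`
by `g k`; if a partition `C` almost refines `A_g`, then for almost all `n` the piece `c_n ∈ C`
chosen to meet `m n` (a choice depending on `C` alone) decides `g n`. So any `R` reaping
`{n | c_n ≤ g n}` in `P(ω)/fin` makes `[n ↦ c_n if n ∈ R]` reap `x`. The cardinal inequalities
follow by pushing dominating and unbounded families through the connection and through `;`.
-/

section Quotient

variable {α : Type} [BooleanAlgebra α] (I : Ideal (AsBoolRing α))

theorem quotCls_surjective : Function.Surjective (quotCls I) := fun q => by
  obtain ⟨z, hz⟩ := Ideal.Quotient.mk_surjective (ofBoolAlg q)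
  exact ⟨ofBoolRing z, by simp only [quotCls, toBoolRing_ofBoolRing, hz]; rfl⟩

theorem quotCls_inf (a b : α) : quotCls I (a ⊓ b) = quotCls I a ⊓ quotCls I b := by
  simp only [quotCls, toBoolRing_inf, map_mul]
  rfl

theorem quotCls_compl (a : α) : quotCls I aᶜ = (quotCls I a)ᶜ := by
  rw [show aᶜ = symmDiff ⊤ a by simp]
  simp only [quotCls, toBoolRing_symmDiff, toBoolRing_top, map_add, map_one]
  rfl

theorem quotCls_eq_bot_iff (a : α) : quotCls I a = ⊥ ↔ toBoolRing a ∈ I :=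
  (toBoolAlg_inj (α := AsBoolRing α ⧸ I)).trans Ideal.Quotient.eq_zero_iff_mem

theorem quotCls_le_iff (a b : α) : quotCls I a ≤ quotCls I b ↔ toBoolRing (a \ b) ∈ I := by
  rw [← quotCls_eq_bot_iff, sdiff_eq, quotCls_inf, quotCls_compl, ← sdiff_eq, sdiff_eq_bot_iff]

theorem quotCls_inf_eq_bot_iff (a b : α) :
    quotCls I a ⊓ quotCls I b = ⊥ ↔ toBoolRing (a ⊓ b) ∈ I := by
  rw [← quotCls_inf, quotCls_eq_bot_iff]

end Quotient

noncomputable def PomegaFin.mk (U : Set ℕ) : PomegaFin := quotCls finIdeal U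

namespace PomegaFin

theorem mk_surjective : Function.Surjective PomegaFin.mk := quotCls_surjective _

theorem mk_eq_bot_iff (U : Set ℕ) : mk U = ⊥ ↔ U.Finite := quotCls_eq_bot_iff _ U

theorem mk_le_mk_iff (U V : Set ℕ) : mk U ≤ mk V ↔ (U \ V).Finite := quotCls_le_iff _ U V

theorem mk_inf_mk_eq_bot_iff (U V : Set ℕ) : mk U ⊓ mk V = ⊥ ↔ (U ∩ V).Finite :=
  quotCls_inf_eq_bot_iff _ U V

end PomegaFin

noncomputable def redPow.mk {B : Type} [BooleanAlgebra B] (g : ℕ → B) : redPow B :=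
  quotCls (finSuppIdeal B) g

namespace redPow

variable {B : Type} [BooleanAlgebra B]

theorem mk_surjective : Function.Surjective (redPow.mk (B := B)) := quotCls_surjective _

theorem mk_eq_bot_iff (g : ℕ → B) : mk g = ⊥ ↔ {n | g n ≠ ⊥}.Finite :=
  quotCls_eq_bot_iff _ g

theorem mk_le_mk_iff (g h : ℕ → B) : mk g ≤ mk h ↔ {n | g n \ h n ≠ ⊥}.Finite :=
  quotCls_le_iff _ g h

theorem mk_inf_mk_eq_bot_iff (g h : ℕ → B) : mk g ⊓ mk h = ⊥ ↔ {n | g n ⊓ h n ≠ ⊥}.Finite :=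
  quotCls_inf_eq_bot_iff _ g h

end redPow

theorem Set.Infinite.exists_infinite_subset_infinite_diff {β : Type} {s : Set β}
    (hs : s.Infinite) : ∃ t ⊆ s, t.Infinite ∧ (s \ t).Infinite := by
  obtain ⟨t, u, rfl, htu, hcard⟩ := hs.exists_union_disjoint_cardinal_eq_of_infinite
  have hfin : t.Finite ↔ u.Finite := by
    rw [← Cardinal.lt_aleph0_iff_set_finite, ← Cardinal.lt_aleph0_iff_set_finite, hcard]
  have ht : t.Infinite := fun ht => hs (ht.union (hfin.1 ht))
  refine ⟨t, Set.subset_union_left, ht, ?_⟩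
  rw [Set.union_sdiff_left, htu.symm.sdiff_eq_left]
  exact fun hu => ht (hfin.2 hu)

theorem PomegaFin.not_isAtom (r : PomegaFin) : ¬ IsAtom r := by
  intro hr
  obtain ⟨R, rfl⟩ := mk_surjective r
  have hR : R.Infinite := fun h => hr.1 ((mk_eq_bot_iff R).2 h)
  obtain ⟨T, hTR, hT, hRT⟩ := hR.exists_infinite_subset_infinite_diff
  have hlt : mk T < mk R := lt_of_le_not_ge
    ((mk_le_mk_iff T R).2 (by simp [Set.sdiff_eq_empty.2 hTR])) (mt (mk_le_mk_iff R T).1 hRT)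
  exact hT ((mk_eq_bot_iff T).1 (hr.2 _ hlt))

theorem redPow.not_isAtom {B : Type} [BooleanAlgebra B] (x : redPow B) : ¬ IsAtom x := by
  classical
  intro hx
  obtain ⟨g, rfl⟩ := mk_surjective x
  have hS : {n | g n ≠ ⊥}.Infinite := fun h => hx.1 ((mk_eq_bot_iff g).2 h)
  obtain ⟨T, hTS, hT, hST⟩ := hS.exists_infinite_subset_infinite_diff
  set h : ℕ → B := fun n => if n ∈ T then g n else ⊥
  have hle : mk h ≤ mk g := (mk_le_mk_iff h g).2 <| by
    convert Set.finite_empty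
    ext n
    by_cases hn : n ∈ T <;> simp [h, hn]
  have hnge : ¬ mk g ≤ mk h := fun hgh => hST <| ((mk_le_mk_iff g h).1 hgh).subset <| by
    rintro n ⟨hn, hnT⟩
    simpa [h, hnT] using hn
  refine hT (((mk_eq_bot_iff h).1 (hx.2 _ (lt_of_le_not_ge hle hnge))).subset ?_)
  intro n hn
  simpa [h, hn] using hTS hn

section RelSys

variable {S T : RelSys}

theorem dNum_le_mk {Y : Set S.Cod} (hY : ∀ a, ∃ y ∈ Y, S.Rel a y) : dNum S ≤ Cardinal.mk Y :=
  csInf_le' ⟨Y, rfl, hY⟩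

theorem bNum_le_mk {X : Set S.Dom} (hX : ∀ c, ∃ x ∈ X, ¬ S.Rel x c) : bNum S ≤ Cardinal.mk X :=
  csInf_le' ⟨X, rfl, hX⟩

theorem exists_dominating_mk_eq_dNum (hS : ∀ a, ∃ c, S.Rel a c) :
    ∃ Y : Set S.Cod, Cardinal.mk Y = dNum S ∧ ∀ a, ∃ y ∈ Y, S.Rel a y :=
  csInf_mem (s := {c | ∃ Y : Set S.Cod, Cardinal.mk Y = c ∧ ∀ a, ∃ y ∈ Y, S.Rel a y})
    ⟨_, Set.univ, rfl, fun a => (hS a).imp fun c hc => ⟨Set.mem_univ c, hc⟩⟩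

theorem exists_unbounded_mk_eq_bNum (hS : ∀ c, ∃ a, ¬ S.Rel a c) :
    ∃ X : Set S.Dom, Cardinal.mk X = bNum S ∧ ∀ c, ∃ x ∈ X, ¬ S.Rel x c :=
  csInf_mem (s := {κ | ∃ X : Set S.Dom, Cardinal.mk X = κ ∧ ∀ c, ∃ x ∈ X, ¬ S.Rel x c})
    ⟨_, Set.univ, rfl, fun c => (hS c).imp fun a ha => ⟨Set.mem_univ a, ha⟩⟩

theorem GT.dNum_le (h : GT S T) (hT : ∀ b, ∃ d, T.Rel b d) : dNum S ≤ dNum T := by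
  obtain ⟨φm, φp, hφ⟩ := h
  obtain ⟨Y, hY, hdom⟩ := exists_dominating_mk_eq_dNum hT
  calc dNum S ≤ Cardinal.mk (φp '' Y) := dNum_le_mk fun a => by
        obtain ⟨y, hy, hr⟩ := hdom (φm a)
        exact ⟨φp y, Set.mem_image_of_mem _ hy, hφ a y hr⟩
    _ ≤ dNum T := hY ▸ Cardinal.mk_image_le

theorem GT.bNum_le (h : GT S T) (hS : ∀ c, ∃ a, ¬ S.Rel a c) : bNum T ≤ bNum S := by
  obtain ⟨φm, φp, hφ⟩ := h
  obtain ⟨X, hX, hunb⟩ := exists_unbounded_mk_eq_bNum hS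
  calc bNum T ≤ Cardinal.mk (φm '' X) := bNum_le_mk fun d => by
        obtain ⟨x, hx, hr⟩ := hunb (φp d)
        exact ⟨φm x, Set.mem_image_of_mem _ hx, fun h => hr (hφ x d h)⟩
    _ ≤ bNum S := hX ▸ Cardinal.mk_image_le

theorem seqComp_total (hS : ∀ a, ∃ c, S.Rel a c) (hT : ∀ b, ∃ d, T.Rel b d) :
    ∀ p, ∃ q, (seqComp S T).Rel p q := fun ⟨a, f⟩ => by
  obtain ⟨c, hc⟩ := hS a
  obtain ⟨d, hd⟩ := hT (f c)
  exact ⟨(c, d), hc, hd⟩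

theorem seqComp_unbounded (a : S.Dom) (hT : ∀ d, ∃ b, ¬ T.Rel b d) :
    ∀ q, ∃ p, ¬ (seqComp S T).Rel p q := fun ⟨_, d⟩ => by
  obtain ⟨b, hb⟩ := hT d
  exact ⟨(a, fun _ => b), fun h => hb h.2⟩

theorem dNum_seqComp_le (hS : ∀ a, ∃ c, S.Rel a c) (hT : ∀ b, ∃ d, T.Rel b d) :
    dNum (seqComp S T) ≤ dNum S * dNum T := by
  obtain ⟨YS, hYS, hdomS⟩ := exists_dominating_mk_eq_dNum hS
  obtain ⟨YT, hYT, hdomT⟩ := exists_dominating_mk_eq_dNum hT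
  calc dNum (seqComp S T) ≤ Cardinal.mk ↥(YS ×ˢ YT) := dNum_le_mk fun ⟨a, f⟩ => by
        obtain ⟨c, hc, hac⟩ := hdomS a
        obtain ⟨d, hd, hfd⟩ := hdomT (f c)
        exact ⟨(c, d), ⟨hc, hd⟩, hac, hfd⟩
    _ = dNum S * dNum T := by rw [Cardinal.mk_congr (Equiv.Set.prod YS YT), Cardinal.mk_prod,
        Cardinal.lift_id, Cardinal.lift_id, hYS, hYT]

theorem min_bNum_le_bNum_seqComp (h : ∀ q, ∃ p, ¬ (seqComp S T).Rel p q) :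
    min (bNum S) (bNum T) ≤ bNum (seqComp S T) := by
  obtain ⟨X, hX, hunb⟩ := exists_unbounded_mk_eq_bNum h
  rw [← hX]
  by_cases hbdd : ∃ c, ∀ p ∈ X, S.Rel p.1 c
  · -- the first coordinates of `X` are bounded by `c`, so the second ones, read at `c`, are not
    obtain ⟨c, hc⟩ := hbdd
    refine min_le_of_right_le ((bNum_le_mk (X := (fun p => p.2 c) '' X) fun d => ?_).trans
      Cardinal.mk_image_le)
    obtain ⟨p, hp, hpq⟩ := hunb (c, d)
    exact ⟨p.2 c, Set.mem_image_of_mem _ hp, fun h => hpq ⟨hc p hp, h⟩⟩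
  · push Not at hbdd
    refine min_le_of_left_le ((bNum_le_mk (X := Prod.fst '' X) fun c => ?_).trans
      Cardinal.mk_image_le)
    obtain ⟨p, hp, hpc⟩ := hbdd c
    exact ⟨p.1, Set.mem_image_of_mem _ hp, hpc⟩

end RelSys

theorem reapSys_total {α : Type} [BooleanAlgebra α] [Nontrivial α] :
    ∀ b : α, ∃ r, (reapSys α).Rel b r := fun b => by
  by_cases hb : b = ⊥
  · exact ⟨⟨⊤, top_ne_bot⟩, Or.inr (by simp [hb])⟩
  · exact ⟨⟨b, hb⟩, Or.inl le_rfl⟩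

theorem exists_lt_ne_bot_of_not_isAtom {α : Type} [BooleanAlgebra α] {a : α} (ha : a ≠ ⊥)
    (h : ¬ IsAtom a) : ∃ b < a, b ≠ ⊥ := by
  simpa [IsAtom, ha] using h

theorem reapSys_unbounded {α : Type} [BooleanAlgebra α] (h : ∀ a : α, ¬ IsAtom a) :
    ∀ r, ∃ b, ¬ (reapSys α).Rel b r := fun ⟨r, hr⟩ => by
  obtain ⟨b, hbr, hb⟩ := exists_lt_ne_bot_of_not_isAtom hr (h r)
  refine ⟨b, not_or.2 ⟨hbr.not_ge, ?_⟩⟩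
  simpa [inf_eq_right.2 hbr.le] using hb

theorem partStar_total {B : Type} [BooleanAlgebra B] : ∀ A, ∃ C, (PartStar B).Rel A C :=
  fun A => ⟨A, ∅, by simp, fun c hc => ⟨c, Or.inl ⟨hc, by simp⟩, le_rfl⟩⟩

instance : Nontrivial PomegaFin :=
  ⟨⟨PomegaFin.mk Set.univ, ⊥, mt (PomegaFin.mk_eq_bot_iff _).1 Set.infinite_univ⟩⟩

section Partitions

open Function

variable {B : Type} [BooleanAlgebra B]

theorem exists_maxAC_superset {D : Set B} (hD : BAAntichain D) : ∃ M, MaxAC M ∧ D ⊆ M := by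
  obtain ⟨M, hDM, hM⟩ := zorn_subset_nonempty {A : Set B | BAAntichain A}
    (fun c hcA hc _ => ⟨⋃₀ c, ⟨fun a ⟨A, hA, ha⟩ => (hcA hA).1 a ha,
      hc.pairwise_sUnion.2 fun A hA a ha b hb => (hcA hA).2 a ha b hb⟩,
      fun _ => Set.subset_sUnion_of_mem⟩) D hD
  refine ⟨M, ⟨hM.prop, fun b hb => ?_⟩, hDM⟩
  by_contra! hdisj
  have hins : BAAntichain (insert b M) := by
    refine ⟨Set.forall_mem_insert.2 ⟨hb, hM.prop.1⟩, ?_⟩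
    exact Set.pairwise_insert.2 ⟨hM.prop.2, fun a ha _ => ⟨inf_comm a b ▸ hdisj a ha, hdisj a ha⟩⟩
  exact hb (by simpa using hdisj b (hM.mem_of_prop_insert hins))

instance : Nonempty (PartT B) :=
  ⟨⟨_, (exists_maxAC_superset (D := (∅ : Set B)) ⟨by simp, by simp⟩).choose_spec.1⟩⟩

theorem exists_disjoint_seq_of_forall_not_isAtom [Nontrivial B] (h : ∀ a : B, ¬ IsAtom a) :
    ∃ d : ℕ → B, (∀ n, d n ≠ ⊥) ∧ Pairwise (Disjoint on d) := by
  have hlt (a : {a : B // a ≠ ⊥}) : ∃ b : {a : B // a ≠ ⊥}, b.1 < a.1 := by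
    obtain ⟨b, hba, hb⟩ := exists_lt_ne_bot_of_not_isAtom a.2 (h a)
    exact ⟨⟨b, hb⟩, hba⟩
  choose next hnext using hlt
  set u : ℕ → B := fun n => (next^[n] ⟨⊤, top_ne_bot⟩).1
  have hu : StrictAnti u := strictAnti_nat_of_succ_lt fun n => by
    simp only [u, iterate_succ_apply']
    exact hnext _
  refine ⟨fun n => u n \ u (n + 1), fun n => by simpa using (hu n.lt_add_one).not_ge, ?_⟩
  exact (pairwise_disjoint_on _).2 fun k n hkn =>
    disjoint_sdiff_self_left.mono_right (sdiff_le.trans (hu.antitone hkn))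

theorem exists_injective_maxAC_range [Nontrivial B] (hccc : CCC B) (h : ∀ a : B, ¬ IsAtom a) :
    ∃ m : ℕ → B, Injective m ∧ MaxAC (Set.range m) := by
  obtain ⟨d, hd, hdisj⟩ := exists_disjoint_seq_of_forall_not_isAtom h
  have hdinj : Injective d := fun i j hij => by
    by_contra hne
    have hii := hdisj hne
    rw [onFun, hij] at hii
    exact hd j (disjoint_self.1 hii)
  obtain ⟨M, hM, hdM⟩ := exists_maxAC_superset (D := Set.range d)
    ⟨Set.forall_mem_range.2 hd, Set.forall_mem_range.2 fun i => Set.forall_mem_range.2 fun j hij =>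
      disjoint_iff.1 (hdisj fun hij' => hij (congrArg d hij'))⟩
  have := (hccc M hM.1).to_subtype
  have := ((Set.infinite_range_of_injective hdinj).mono hdM).to_subtype
  obtain ⟨_⟩ := nonempty_denumerable M
  refine ⟨Subtype.val ∘ (Denumerable.eqv M).symm,
    Subtype.val_injective.comp (Equiv.injective _), ?_⟩
  rwa [Set.range_comp, Equiv.range_eq_univ, Set.image_univ, Subtype.range_val]

end Partitions

section SplitPartition

variable {B : Type} [BooleanAlgebra B] {m : ℕ → B}

theorem eq_of_le_of_inf_ne_bot (hm : Function.Injective m) (hM : MaxAC (Set.range m))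
    {b : B} {k n : ℕ} (hb : b ≤ m k) (hbn : b ⊓ m n ≠ ⊥) : k = n := by
  by_contra hkn
  exact hbn (le_bot_iff.1 (hM.1.2 _ ⟨k, rfl⟩ _ ⟨n, rfl⟩ (hm.ne hkn) ▸ inf_le_inf_right _ hb))

def splitPart (m g : ℕ → B) : Set B :=
  {b | b ≠ ⊥ ∧ ∃ k, b = m k ⊓ g k ∨ b = m k ⊓ (g k)ᶜ}

theorem exists_le_of_mem_splitPart {g : ℕ → B} {b : B} (hb : b ∈ splitPart m g) :
    ∃ k, b ≤ m k ∧ (b ≤ g k ∨ b ≤ (g k)ᶜ) := by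
  obtain ⟨-, k, rfl | rfl⟩ := hb
  exacts [⟨k, inf_le_left, Or.inl inf_le_right⟩, ⟨k, inf_le_left, Or.inr inf_le_right⟩]

theorem splitPart_maxAC (hm : Function.Injective m) (hM : MaxAC (Set.range m)) (g : ℕ → B) :
    MaxAC (splitPart m g) := by
  refine ⟨⟨fun b hb => hb.1, ?_⟩, fun b hb => ?_⟩
  · rintro a ⟨-, k, ha⟩ b ⟨-, l, hb⟩ hab
    obtain rfl | hkl := eq_or_ne k l
    · rcases ha with rfl | rfl <;> rcases hb with rfl | rfl
      · exact absurd rfl hab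
      · exact le_bot_iff.1 ((inf_le_inf inf_le_right inf_le_right).trans (inf_compl_self _).le)
      · exact le_bot_iff.1 ((inf_le_inf inf_le_right inf_le_right).trans (compl_inf_self _).le)
      · exact absurd rfl hab
    · have hak : a ≤ m k := by rcases ha with rfl | rfl <;> exact inf_le_left
      have hbl : b ≤ m l := by rcases hb with rfl | rfl <;> exact inf_le_left
      exact le_bot_iff.1 (hM.1.2 _ ⟨k, rfl⟩ _ ⟨l, rfl⟩ (hm.ne hkl) ▸ inf_le_inf hak hbl)
  · obtain ⟨-, ⟨k, rfl⟩, hkb⟩ := hM.2 b hb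
    by_contra! hdisj
    have hpiece (a : B) (ha : a = m k ⊓ g k ∨ a = m k ⊓ (g k)ᶜ) : a ⊓ b = ⊥ := by
      by_cases ha0 : a = ⊥
      · rw [ha0, bot_inf_eq]
      · exact hdisj a ⟨ha0, k, ha⟩
    apply hkb
    rw [← inf_top_eq (m k), ← sup_compl_eq_top (x := g k), inf_sup_left, inf_sup_right,
      hpiece _ (Or.inl rfl), hpiece _ (Or.inr rfl), sup_bot_eq]

theorem eventually_decides_of_almostRefines_splitPart (hm : Function.Injective m)
    (hM : MaxAC (Set.range m)) {g : ℕ → B} {C : Set B}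
    (hC : AlmostRefines (splitPart m g) C) :
    ∀ᶠ n in Filter.cofinite, ∀ c ∈ C, c ⊓ m n ≠ ⊥ → c ≤ g n ∨ c ⊓ g n = ⊥ := by
  obtain ⟨F, hF, href⟩ := hC
  -- each piece of `splitPart m g` lies below a single `m k`, so `F.sup id` meets only finitely
  -- many `m n`; for the other `n`, every piece of `C` meeting `m n` lies below a piece of `A \ F`
  have hfin : {n | F.sup id ⊓ m n ≠ ⊥}.Finite := by
    refine (F.finite_toSet.biUnion fun b hb => ?_).subset (s := ⋃ b ∈ F, {n | b ⊓ m n ≠ ⊥})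
      fun n hn => ?_
    · obtain ⟨k, hbk, -⟩ := exists_le_of_mem_splitPart (hF hb)
      exact Set.Subsingleton.finite fun i hi j hj =>
        (eq_of_le_of_inf_ne_bot hm hM hbk hi).symm.trans (eq_of_le_of_inf_ne_bot hm hM hbk hj)
    · simpa [Finset.sup_inf_distrib_right, Finset.sup_eq_bot_iff] using hn
  refine Filter.eventually_cofinite.2 (hfin.subset fun n hn hFn => hn fun c hc hcn => ?_)
  obtain ⟨a, ha | ha, hca⟩ := href c hc
  · obtain ⟨k, hak, hdec⟩ := exists_le_of_mem_splitPart ha.1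
    obtain rfl := eq_of_le_of_inf_ne_bot hm hM (hca.trans hak) hcn
    refine hdec.imp (hca.trans ·) fun hag => ?_
    exact disjoint_iff.1 (le_compl_iff_disjoint_right.1 (hca.trans hag))
  · rw [Set.mem_singleton_iff] at ha
    exact absurd (le_bot_iff.1 (hFn ▸ inf_le_inf_right _ (ha ▸ hca))) hcn

noncomputable def pieceMeeting (C : Set B) (b : B) : B :=
  Classical.epsilon fun c => c ∈ C ∧ c ⊓ b ≠ ⊥

theorem pieceMeeting_spec {C : Set B} (hC : MaxAC C) {b : B} (hb : b ≠ ⊥) :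
    pieceMeeting C b ∈ C ∧ pieceMeeting C b ⊓ b ≠ ⊥ :=
  Classical.epsilon_spec (hC.2 b hb)

end SplitPartition

section DecidingChoice

variable {B : Type} [BooleanAlgebra B]

theorem redPow.mk_ite_ne_bot {c : ℕ → B} {R : Set ℕ} [DecidablePred (· ∈ R)]
    (hc : ∀ n, c n ≠ ⊥) (hR : R.Infinite) : redPow.mk (fun n => if n ∈ R then c n else ⊥) ≠ ⊥ :=
  fun h => hR (((redPow.mk_eq_bot_iff _).1 h).subset fun n hn => by simpa [hn] using hc n)

theorem redPow.mk_ite_reaps {c g : ℕ → B} {R : Set ℕ} [DecidablePred (· ∈ R)]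
    (hdec : ∀ᶠ n in Filter.cofinite, c n ≤ g n ∨ c n ⊓ g n = ⊥)
    (hR : PomegaFin.mk R ≤ PomegaFin.mk {n | c n ≤ g n} ∨
      PomegaFin.mk R ⊓ PomegaFin.mk {n | c n ≤ g n} = ⊥) :
    redPow.mk (fun n => if n ∈ R then c n else ⊥) ≤ redPow.mk g ∨
      redPow.mk (fun n => if n ∈ R then c n else ⊥) ⊓ redPow.mk g = ⊥ := by
  rw [PomegaFin.mk_le_mk_iff, PomegaFin.mk_inf_mk_eq_bot_iff] at hR
  rw [redPow.mk_le_mk_iff, redPow.mk_inf_mk_eq_bot_iff]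
  refine hR.imp (fun hle => hle.subset fun n hn => ?_)
    fun hdisj => (hdisj.union (Filter.eventually_cofinite.1 hdec)).subset fun n hn => ?_
  · by_cases hnR : n ∈ R <;> simp_all [sdiff_eq_bot_iff]
  · by_cases hnR : n ∈ R <;> by_cases hcg : c n ≤ g n <;> simp_all

structure DecidingChoice (B : Type) [BooleanAlgebra B] where
  pick : PartT B → ℕ → B
  pick_ne_bot : ∀ C n, pick C n ≠ ⊥
  decides : ∀ g : ℕ → B, ∃ A : PartT B, ∀ C : PartT B, AlmostRefines A.1 C.1 →
    ∀ᶠ n in Filter.cofinite, pick C n ≤ g n ∨ pick C n ⊓ g n = ⊥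

theorem DecidingChoice.galoisTukey (d : DecidingChoice B) :
    GT (reapSys (redPow B)) (seqComp (PartStar B) (reapSys PomegaFin)) := by
  classical
  choose g hg using redPow.mk_surjective (B := B)
  choose R hR using PomegaFin.mk_surjective
  choose A hA using d.decides
  refine ⟨fun x => (A (g x), fun C => PomegaFin.mk {n | d.pick C n ≤ g x n}),
    fun q => ⟨redPow.mk fun n => if n ∈ R q.2.1 then d.pick q.1 n else ⊥,
      redPow.mk_ite_ne_bot (d.pick_ne_bot q.1) fun hfin => q.2.2 ?_⟩, ?_⟩
  · rw [← hR q.2.1, PomegaFin.mk_eq_bot_iff]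
    exact hfin
  · rintro x ⟨C, r, _⟩ ⟨hAC, hreap⟩
    rw [← hg x]
    exact redPow.mk_ite_reaps (hA (g x) C hAC) (by rw [hR r]; exact hreap)

def DecidingChoice.ofAtom {a : B} (ha : IsAtom a) : DecidingChoice B where
  pick _ _ := a
  pick_ne_bot _ _ := ha.1
  decides g := ⟨Classical.arbitrary _, fun _ _ => Filter.Eventually.of_forall fun n =>
    (em (a ≤ g n)).imp_right fun h => disjoint_iff.1 (ha.not_le_iff_disjoint.1 h)⟩

noncomputable def DecidingChoice.ofMaxACRange {m : ℕ → B} (hm : Function.Injective m)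
    (hM : MaxAC (Set.range m)) : DecidingChoice B where
  pick C n := pieceMeeting C.1 (m n)
  pick_ne_bot C n := C.2.1.1 _ (pieceMeeting_spec C.2 (hM.1.1 _ ⟨n, rfl⟩)).1
  decides g := ⟨⟨splitPart m g, splitPart_maxAC hm hM g⟩, fun C hC =>
    (eventually_decides_of_almostRefines_splitPart hm hM hC).mono fun n hn =>
      let ⟨hmem, hmeet⟩ := pieceMeeting_spec C.2 (hM.1.1 _ ⟨n, rfl⟩)
      hn _ hmem hmeet⟩

theorem DecidingChoice.nonempty [Nontrivial B] (hccc : CCC B) : Nonempty (DecidingChoice B) := by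
  by_cases h : ∃ a : B, IsAtom a
  · obtain ⟨a, ha⟩ := h
    exact ⟨.ofAtom ha⟩
  · push Not at h
    obtain ⟨m, hm, hM⟩ := exists_injective_maxAC_range hccc h
    exact ⟨.ofMaxACRange hm hM⟩

end DecidingChoice

/-- For c.c.c. `B`, `R(ωB/Fin) ≤_T Part*(B) ; R(P(ω)/fin)`; consequently
`𝔯(ωB/Fin) ≤ 𝔡(Part*(B))·𝔯` and `min{𝔟(Part*(B)), 𝔰} ≤ 𝔰(ωB/Fin)`. -/
theorem stmt16 (B : Type) [BooleanAlgebra B] [Nontrivial B] (hccc : CCC B) :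
    GT (reapSys (redPow B)) (seqComp (PartStar B) (reapSys PomegaFin)) ∧
      dNum (reapSys (redPow B)) ≤ dNum (PartStar B) * dNum (reapSys PomegaFin) ∧
      min (bNum (PartStar B)) (bNum (reapSys PomegaFin)) ≤ bNum (reapSys (redPow B)) := by
  have hGT := (DecidingChoice.nonempty hccc).some.galoisTukey
  refine ⟨hGT, ?_, ?_⟩
  · calc dNum (reapSys (redPow B))
        ≤ dNum (seqComp (PartStar B) (reapSys PomegaFin)) :=
          hGT.dNum_le (seqComp_total partStar_total (reapSys_total (α := PomegaFin)))
      _ ≤ dNum (PartStar B) * dNum (reapSys PomegaFin) :=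
          dNum_seqComp_le partStar_total (reapSys_total (α := PomegaFin))
  · calc min (bNum (PartStar B)) (bNum (reapSys PomegaFin))
        ≤ bNum (seqComp (PartStar B) (reapSys PomegaFin)) :=
          min_bNum_le_bNum_seqComp (seqComp_unbounded (Classical.arbitrary (PartT B))
            (reapSys_unbounded PomegaFin.not_isAtom))
      _ ≤ bNum (reapSys (redPow B)) := hGT.bNum_le (reapSys_unbounded redPow.not_isAtom)
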